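/- Every connected graph G on n ≥ 4 vertices in which all cycles are triangles, every cycle pair shares at most one vertex, and whose number of edges is maximal among connected cacti on n vertices, has at most one vertex of degree at most 1; furthermore if G has two or more vertices of degree ≥ 3, then some two vertices of degree ≥ 3 are adjacent. -/

import Mathlib

open SimpleGraph Finset

open scoped Classical in
/-- The adjacency matrix of a graph over `ℝ` (using classical decidability). -/
noncomputable def adjMat {V : Type*} [Fintype V] [DecidableEq V] (G : SimpleGraph V) :
    Matrix V V ℝ :=
  fun a b => if G.Adj a b then 1 else 0

theorem adjMat_isHermitian {V : Type*} [Fintype V] [DecidableEq V] (G : SimpleGraph V) :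
    (adjMat G).IsHermitian := by
  ext a b
  rw [Matrix.conjTranspose_apply]
  by_cases h : G.Adj a b
  · simp [adjMat, h, h.symm]
  · simp [adjMat, h, mt (fun h' : G.Adj b a => h'.symm) h]

/-- The spectral radius (specRad) (largest adjacency eigenvalue) of a graph. -/
noncomputable def specRad {V : Type*} [Fintype V] [DecidableEq V]
    (G : SimpleGraph V) : ℝ :=
  ⨆ a : V, (adjMat_isHermitian G).eigenvalues a

/-- A cactus: any two distinct cycles (distinct as edge sets) share at most one vertex. -/
def IsCactus {V : Type*} [DecidableEq V] (G : SimpleGraph V) : Prop :=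
  ∀ ⦃u v : V⦄ (c₁ : G.Walk u u) (c₂ : G.Walk v v), c₁.IsCycle → c₂.IsCycle →
    c₁.edges.toFinset ≠ c₂.edges.toFinset →
      (c₁.support.toFinset ∩ c₂.support.toFinset).card ≤ 1

/-- A unicyclic graph: connected with exactly one cycle (one cycle edge set). -/
def Unicyclic {V : Type*} [DecidableEq V] (G : SimpleGraph V) : Prop :=
  G.Connected ∧ ∃! E : Finset (Sym2 V), ∃ (w : V) (c : G.Walk w w),
    c.IsCycle ∧ c.edges.toFinset = E

/-- The star `K_{1,n-1}` on `Fin n` with center `0`. -/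
def starGraph (n : ℕ) : SimpleGraph (Fin n) where
  Adj a b := a ≠ b ∧ ((a : ℕ) = 0 ∨ (b : ℕ) = 0)
  symm := by constructor; tauto
  loopless := by constructor; tauto

/-- `K_{1,n-1}^+`: the star plus one edge between the leaves `1` and `2`. -/
def starPlus (n : ℕ) : SimpleGraph (Fin n) where
  Adj a b := a ≠ b ∧ ((a : ℕ) = 0 ∨ (b : ℕ) = 0 ∨ ((a : ℕ) ≤ 2 ∧ (b : ℕ) ≤ 2))
  symm := by constructor; tauto
  loopless := by constructor; tauto

/-- `H_n`: the star `K_{1,n-1}` plus `⌊(n-1)/2⌋` independent edges `(1,2), (3,4), …`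
between pairs of leaves. -/
def Hgraph (n : ℕ) : SimpleGraph (Fin n) where
  Adj a b := a ≠ b ∧ ((a : ℕ) = 0 ∨ (b : ℕ) = 0 ∨
    ((a : ℕ) % 2 = 1 ∧ (b : ℕ) = a + 1) ∨ ((b : ℕ) % 2 = 1 ∧ (a : ℕ) = b + 1))
  symm := by constructor; tauto
  loopless := by constructor; tauto

/-- Rewiring: delete the edges `v w` and add the edges `u w` for `w ∈ S`. -/
def rewire {V : Type*} (G : SimpleGraph V) (u v : V) (S : Set V) : SimpleGraph V :=
  SimpleGraph.fromEdgeSet ((G.edgeSet \ {e | ∃ w ∈ S, e = s(v, w)}) ∪ {e | ∃ w ∈ S, e = s(u, w)})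

/-- An edge lies in a triangle of `G`. -/
def InTriangle {V : Type*} (G : SimpleGraph V) (e : Sym2 V) : Prop :=
  ∃ a b c : V, G.Adj a b ∧ G.Adj b c ∧ G.Adj a c ∧
    (e = s(a, b) ∨ e = s(b, c) ∨ e = s(a, c))


/-!
A *cherry* `x₀ - x₁ - x₂` is a vertex `x₁` whose only neighbours are two non-adjacent vertices
`x₀, x₂`. In a cactus whose cycles are all triangles, `x₁` lies on no cycle and `x₂ x₁ x₀` is the
only `x₂ - x₀` path, so adding the edge `x₀ x₂` creates a single new cycle, the triangle
`x₀ x₁ x₂`, which meets every old cycle in at most one vertex. An edge-maximal connected cactus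
therefore has no cherry. If it had two leaves `u` and `b`, re-hanging `b` at `u` would keep the
number of edges and make `b - u - x` a cherry, `x` being the neighbour of `u`. If it had two
vertices of degree at least three but no adjacent pair of such, a path from one of them, `a`, to
another leaves the closed neighbourhood of `a` along an edge `y z` with `y` a neighbour of `a` of
degree two, and `a - y - z` is a cherry.
-/

section

variable {V : Type*} {G H : SimpleGraph V}

namespace SimpleGraph

def CyclesAreTriangles (G : SimpleGraph V) : Prop :=
  ∀ (u : V) (c : G.Walk u u), c.IsCycle → c.length = 3

structure IsCherry (G : SimpleGraph V) (x₀ x₁ x₂ : V) : Prop where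
  neighborSet_eq : G.neighborSet x₁ = {x₀, x₂}
  ne : x₀ ≠ x₂
  not_adj : ¬G.Adj x₀ x₂

namespace Walk

lemma IsCycle.exists_adj_ne_of_mem_support [DecidableEq V] {u v : V} {c : G.Walk u u}
    (hc : c.IsCycle) (hv : v ∈ c.support) :
    ∃ y z, y ∈ c.support ∧ z ∈ c.support ∧ y ≠ z ∧ G.Adj v y ∧ G.Adj v z := by
  have hc' := hc.rotate hv
  refine ⟨(c.rotate v hv).snd, (c.rotate v hv).penultimate, ?_, ?_, hc'.snd_ne_penultimate,
    adj_snd hc'.not_nil, (adj_penultimate hc'.not_nil).symm⟩ <;>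
  exact (mem_support_rotate_iff c v hv).1 (getVert_mem_support _ _)

lemma IsCycle.notMem_support_of_subsingleton [DecidableEq V] {u v : V} {c : G.Walk u u}
    (hc : c.IsCycle) (hv : (G.neighborSet v).Subsingleton) : v ∉ c.support := fun hmem ↦ by
  obtain ⟨y, z, -, -, hyz, hy, hz⟩ := hc.exists_adj_ne_of_mem_support hmem
  exact hyz (hv hy hz)

lemma IsCycle.exists_cons_of_mem_edges [DecidableEq V] {u a b : V} {c : G.Walk u u}
    (hc : c.IsCycle) (he : s(a, b) ∈ c.edges) :
    ∃ (h : G.Adj a b) (p : G.Walk b a), (cons h p).IsCycle ∧ (cons h p).edges.Perm c.edges := by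
  have ha := c.fst_mem_support_of_mem_edges he
  suffices ∀ c : G.Walk a a, c.IsCycle → s(a, b) ∈ c.edges →
      ∃ (h : G.Adj a b) (p : G.Walk b a), (cons h p).IsCycle ∧ (cons h p).edges.Perm c.edges by
    obtain ⟨h, p, hcyc, hperm⟩ := this (c.rotate a ha) (hc.rotate ha)
      ((c.rotate_edges a ha).perm.mem_iff.2 he)
    exact ⟨h, p, hcyc, hperm.trans (c.rotate_edges a ha).perm⟩
  rintro (_ | ⟨h, p⟩) hc he
  · exact absurd hc not_isCycle_nil
  rename_i y
  by_cases hyb : y = b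
  · subst hyb
    exact ⟨h, p, hc, .rfl⟩
  -- the cycle leaves `a` towards `y ≠ b`, so it returns to `a` along `s(a, b)`
  obtain ⟨hp, -⟩ := (cons_isCycle_iff p h).1 hc
  obtain ⟨z, h', r, hr⟩ := exists_eq_cons_of_ne h.ne p.reverse
  have hrev : (cons h p).reverse = cons h' (r.concat h.symm) := by
    rw [reverse_cons, hr]; rfl
  have hzb : z = b := by
    have hbp : s(a, b) ∈ p.reverse.edges := by
      rw [edges_reverse, List.mem_reverse]
      simpa [h.ne, Ne.symm hyb] using he
    rw [hr, edges_cons, List.mem_cons] at hbp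
    rcases hbp with hbp | hbp
    · exact (Sym2.congr_right.1 hbp).symm
    · have hr' := hp.reverse
      rw [hr, cons_isPath_iff] at hr'
      exact absurd (r.fst_mem_support_of_mem_edges hbp) hr'.2
  subst hzb
  refine ⟨h', r.concat h.symm, hrev ▸ hc.reverse, ?_⟩
  rw [← hrev, edges_reverse]
  exact List.reverse_perm _

lemma edges_eq_of_length_eq_two {u v : V} (p : G.Walk u v) (hp : p.length = 2) :
    p.edges = [s(u, p.getVert 1), s(p.getVert 1, v)] := by
  match p, hp with
  | cons _ (cons _ nil), _ => rfl

lemma mem_edgeSet_of_notMem_edges_sup_edge {s t u v : V} (p : (G ⊔ edge s t).Walk u v)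
    (hp : s(s, t) ∉ p.edges) {e : Sym2 V} (he : e ∈ p.edges) : e ∈ G.edgeSet := by
  have := p.edges_subset_edgeSet he
  rw [edgeSet_sup, edgeSet_edge] at this
  rcases this with h | ⟨rfl, -⟩
  · exact h
  · exact absurd he hp

end Walk

namespace CyclesAreTriangles

lemma adj_of_mem_support [DecidableEq V] (htri : CyclesAreTriangles G) {u v w : V}
    {c : G.Walk u u} (hc : c.IsCycle) (hv : v ∈ c.support) (hw : w ∈ c.support) (hvw : v ≠ w) :
    G.Adj v w := by
  have hw' := (Walk.mem_support_rotate_iff c v hv).2 hw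
  have hc' := hc.rotate hv
  generalize c.rotate v hv = c' at hw' hc'
  have hlen : c'.length = 3 := htri v c' hc'
  obtain ⟨i, rfl, hi⟩ := Walk.mem_support_iff_exists_getVert.1 hw'
  have hi0 : i ≠ 0 := by rintro rfl; exact hvw (Walk.getVert_zero _).symm
  have hi3 : i ≠ 3 := by rintro rfl; exact hvw (by rw [← hlen, Walk.getVert_length])
  obtain rfl | rfl : i = 1 ∨ i = 2 := by omega
  · simpa using c'.adj_getVert_succ (i := 0) (by omega)
  · simpa [← hlen] using (c'.adj_getVert_succ (i := 2) (by omega)).symm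

lemma of_forall_isCycle (htri : CyclesAreTriangles G)
    (h : ∀ (u : V) (c : H.Walk u u), c.IsCycle → ∀ e ∈ c.edges, e ∈ G.edgeSet) :
    CyclesAreTriangles H := fun u c hc ↦ by
  simpa using htri u (c.transfer G (h u c hc)) (hc.transfer _)

end CyclesAreTriangles

end SimpleGraph

lemma IsCactus.of_isCycle_cases [DecidableEq V] (hG : IsCactus G) (T : Finset (Sym2 V))
    (S : Finset V) (hTS : ∀ e ∈ T, ∀ v ∈ e, v ∈ S)
    (hcases : ∀ (u : V) (c : H.Walk u u), c.IsCycle →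
      (∀ e ∈ c.edges, e ∈ G.edgeSet) ∨ c.edges.toFinset = T)
    (hmeet : ∀ (u : V) (c : G.Walk u u), c.IsCycle → (c.support.toFinset ∩ S).card ≤ 1) :
    IsCactus H := by
  have hsupp : ∀ {u : V} (c : H.Walk u u), c.IsCycle → c.edges.toFinset = T →
      c.support.toFinset ⊆ S := by
    intro u c hc hT v hv
    obtain ⟨e, he, hve⟩ := (Walk.mem_support_iff_exists_mem_edges_of_not_nil hc.not_nil).1
      (List.mem_toFinset.1 hv)
    exact hTS e (hT ▸ List.mem_toFinset.2 he) v hve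
  have hmeet' : ∀ {u v : V} (c₁ : H.Walk u u) (c₂ : H.Walk v v) (h₁ : c₁.IsCycle),
      c₂.IsCycle → (hG₁ : ∀ e ∈ c₁.edges, e ∈ G.edgeSet) → c₂.edges.toFinset = T →
      (c₁.support.toFinset ∩ c₂.support.toFinset).card ≤ 1 := by
    intro u v c₁ c₂ h₁ h₂ hG₁ hT₂
    calc _ ≤ ((c₁.transfer G hG₁).support.toFinset ∩ S).card := by
          rw [Walk.support_transfer]
          exact card_le_card (inter_subset_inter_left (hsupp c₂ h₂ hT₂))
      _ ≤ 1 := hmeet _ _ (h₁.transfer hG₁)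
  intro u v c₁ c₂ h₁ h₂ hne
  rcases hcases u c₁ h₁ with hG₁ | hT₁ <;> rcases hcases v c₂ h₂ with hG₂ | hT₂
  · simpa [Walk.support_transfer] using hG (c₁.transfer G hG₁) (c₂.transfer G hG₂)
      (h₁.transfer hG₁) (h₂.transfer hG₂) (by simpa [Walk.edges_transfer])
  · exact hmeet' c₁ c₂ h₁ h₂ hG₁ hT₂
  · rw [inter_comm]
    exact hmeet' c₂ c₁ h₂ h₁ hG₂ hT₁
  · exact absurd (hT₁.trans hT₂.symm) hne

lemma IsCactus.of_forall_isCycle [DecidableEq V] (hG : IsCactus G)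
    (h : ∀ (u : V) (c : H.Walk u u), c.IsCycle → ∀ e ∈ c.edges, e ∈ G.edgeSet) : IsCactus H :=
  hG.of_isCycle_cases ∅ ∅ (by simp) (fun u c hc ↦ .inl (h u c hc)) (by simp)

namespace SimpleGraph

namespace IsCherry

variable {x₀ x₁ x₂ : V}

lemma adj_left (h : G.IsCherry x₀ x₁ x₂) : G.Adj x₁ x₀ := by
  rw [← mem_neighborSet, h.neighborSet_eq]; exact Set.mem_insert _ _

lemma adj_right (h : G.IsCherry x₀ x₁ x₂) : G.Adj x₁ x₂ := by
  rw [← mem_neighborSet, h.neighborSet_eq]; exact Set.mem_insert_of_mem _ rfl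

lemma eq_or_eq_of_adj (h : G.IsCherry x₀ x₁ x₂) {t : V} (ht : G.Adj x₁ t) : t = x₀ ∨ t = x₂ := by
  rwa [← mem_neighborSet, h.neighborSet_eq] at ht

lemma ncard_edgeSet_sup_edge [Finite V] (h : G.IsCherry x₀ x₁ x₂) :
    (G ⊔ edge x₀ x₂).edgeSet.ncard = G.edgeSet.ncard + 1 := by
  rw [edgeSet_sup, edgeSet_edge_of_ne h.ne, Set.union_singleton,
    Set.ncard_insert_of_notMem (s := G.edgeSet) h.not_adj]

variable [DecidableEq V]

lemma notMem_support_of_isCycle (htri : CyclesAreTriangles G) (h : G.IsCherry x₀ x₁ x₂)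
    {u : V} {c : G.Walk u u} (hc : c.IsCycle) : x₁ ∉ c.support := fun hx₁ ↦ by
  obtain ⟨y, z, hy, hz, hyz, hx₁y, hx₁z⟩ := hc.exists_adj_ne_of_mem_support hx₁
  have hadj := htri.adj_of_mem_support hc hy hz hyz
  rcases h.eq_or_eq_of_adj hx₁y with rfl | rfl <;> rcases h.eq_or_eq_of_adj hx₁z with rfl | rfl
  · exact hyz rfl
  · exact h.not_adj hadj
  · exact h.not_adj hadj.symm
  · exact hyz rfl

lemma card_support_inter_le_one (htri : CyclesAreTriangles G) (h : G.IsCherry x₀ x₁ x₂)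
    {u : V} {c : G.Walk u u} (hc : c.IsCycle) :
    (c.support.toFinset ∩ {x₀, x₁, x₂}).card ≤ 1 := by
  have hx₁ := h.notMem_support_of_isCycle htri hc
  refine card_le_one.2 fun v hv w hw ↦ by_contra fun hvw ↦ ?_
  simp only [mem_inter, List.mem_toFinset, mem_insert, mem_singleton] at hv hw
  have hadj := htri.adj_of_mem_support hc hv.1 hw.1 hvw
  obtain ⟨hv, rfl | rfl | rfl⟩ := hv <;> obtain ⟨hw, rfl | rfl | rfl⟩ := hw <;>
    first | exact hvw rfl | exact hx₁ ‹_› | exact h.not_adj hadj | exact h.not_adj hadj.symm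

lemma edges_eq_of_isPath (htri : CyclesAreTriangles G) (h : G.IsCherry x₀ x₁ x₂)
    {p : G.Walk x₂ x₀} (hp : p.IsPath) : p.edges = [s(x₂, x₁), s(x₁, x₀)] := by
  -- a path avoiding `x₁` would close up, through `x₁`, to a cycle of length at least four
  have hx₁ : x₁ ∈ p.support := by
    by_contra hx₁
    have hcyc : (Walk.cons h.adj_right (p.concat h.adj_left.symm)).IsCycle := by
      refine (Walk.cons_isCycle_iff _ _).2 ⟨hp.concat hx₁ _, ?_⟩
      rw [Walk.edges_concat, List.concat_eq_append, List.mem_append, List.mem_singleton,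
        Sym2.eq_swap, Sym2.congr_left]
      exact fun h' ↦ h'.elim (fun he ↦ hx₁ (p.snd_mem_support_of_mem_edges he)) h.ne.symm
    have hlen := htri _ _ hcyc
    rw [Walk.length_cons, Walk.length_concat] at hlen
    exact h.not_adj (Walk.adj_of_length_eq_one (p := p) (by omega)).symm
  -- `x₁` is an inner vertex of `p` whose two path-neighbours must be the endpoints
  obtain ⟨i, hi, hiL⟩ := Walk.mem_support_iff_exists_getVert.1 hx₁
  have hi0 : i ≠ 0 := by rintro rfl; exact h.adj_right.ne (by rw [← hi, Walk.getVert_zero])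
  have hiL' : i ≠ p.length := by rintro rfl; exact h.adj_left.ne (by rw [← hi, Walk.getVert_length])
  have hend : ∀ j ≤ p.length, G.Adj x₁ (p.getVert j) → j = 0 ∨ j = p.length := fun j hj hadj ↦
    (h.eq_or_eq_of_adj hadj).symm.imp (hp.getVert_eq_start_iff hj).1 (hp.getVert_eq_end_iff hj).1
  have hprev := p.adj_getVert_succ (i := i - 1) (by omega)
  rw [Nat.sub_add_cancel (by omega), hi] at hprev
  have hnext := p.adj_getVert_succ (i := i) (by omega)
  rw [hi] at hnext
  have h₁ := hend (i - 1) (by omega) hprev.symm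
  have h₂ := hend (i + 1) (by omega) hnext
  obtain rfl : i = 1 := by omega
  rw [Walk.edges_eq_of_length_eq_two p (by omega), hi]

lemma isCycle_sup_edge_cases (htri : CyclesAreTriangles G)
    (h : G.IsCherry x₀ x₁ x₂) {u : V} {c : (G ⊔ edge x₀ x₂).Walk u u} (hc : c.IsCycle) :
    (∀ e ∈ c.edges, e ∈ G.edgeSet) ∨ c.edges.toFinset = {s(x₀, x₂), s(x₂, x₁), s(x₁, x₀)} := by
  by_cases he : s(x₀, x₂) ∈ c.edges
  · obtain ⟨hadj, p, hcyc, hperm⟩ := hc.exists_cons_of_mem_edges he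
    obtain ⟨hp, hpe⟩ := (Walk.cons_isCycle_iff p hadj).1 hcyc
    have hG := fun e ↦ p.mem_edgeSet_of_notMem_edges_sup_edge hpe (e := e)
    have hpath := h.edges_eq_of_isPath htri (hp.transfer hG)
    rw [Walk.edges_transfer] at hpath
    right
    rw [← List.toFinset_eq_of_perm _ _ hperm, Walk.edges_cons, hpath]
    simp
  · exact .inl fun e ↦ c.mem_edgeSet_of_notMem_edges_sup_edge he

lemma isCactus_sup_edge (htri : CyclesAreTriangles G) (hcac : IsCactus G)
    (h : G.IsCherry x₀ x₁ x₂) : IsCactus (G ⊔ edge x₀ x₂) :=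
  hcac.of_isCycle_cases {s(x₀, x₂), s(x₂, x₁), s(x₁, x₀)} {x₀, x₁, x₂} (by simp)
    (fun _ _ hc ↦ h.isCycle_sup_edge_cases htri hc)
    (fun _ _ hc ↦ h.card_support_inter_le_one htri hc)

end IsCherry

section Rehang

variable {u b : V}

lemma deleteIncidenceSet_sup_edge_adj {s t : V} :
    (G.deleteIncidenceSet b ⊔ edge u b).Adj s t ↔
      G.Adj s t ∧ s ≠ b ∧ t ≠ b ∨ (s = u ∧ t = b ∨ s = b ∧ t = u) ∧ s ≠ t := by
  rw [sup_adj, deleteIncidenceSet_adj, edge_adj]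

lemma neighborSet_deleteIncidenceSet_sup_edge (hub : u ≠ b) :
    (G.deleteIncidenceSet b ⊔ edge u b).neighborSet b = {u} := by
  ext t
  simp only [mem_neighborSet, deleteIncidenceSet_sup_edge_adj, Set.mem_singleton_iff]
  grind

lemma mem_edgeSet_of_isCycle_deleteIncidenceSet_sup_edge [DecidableEq V] (hub : u ≠ b) {v : V}
    {c : (G.deleteIncidenceSet b ⊔ edge u b).Walk v v} (hc : c.IsCycle) :
    ∀ e ∈ c.edges, e ∈ G.edgeSet := by
  have hb : b ∉ c.support := hc.notMem_support_of_subsingleton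
    (by rw [neighborSet_deleteIncidenceSet_sup_edge hub]; exact Set.subsingleton_singleton)
  intro e he
  induction e using Sym2.ind with | h s t => ?_
  have hs : s ≠ b := fun hs ↦ hb (hs ▸ c.fst_mem_support_of_mem_edges he)
  have ht : t ≠ b := fun ht ↦ hb (ht ▸ c.snd_mem_support_of_mem_edges he)
  have hadj := c.adj_of_mem_edges he
  rw [deleteIncidenceSet_sup_edge_adj] at hadj
  simpa [hs, ht] using hadj

lemma Connected.deleteIncidenceSet_sup_edge (hconn : G.Connected)
    (hb : (G.neighborSet b).Subsingleton) (hub : u ≠ b) :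
    (G.deleteIncidenceSet b ⊔ edge u b).Connected := by
  have hreach : ∀ a, (G.deleteIncidenceSet b ⊔ edge u b).Reachable a u := by
    intro a
    by_cases hab : a = b
    · subst hab
      exact Adj.reachable (deleteIncidenceSet_sup_edge_adj.2 (.inr ⟨.inr ⟨rfl, rfl⟩, hub.symm⟩))
    obtain ⟨p, hp⟩ := hconn.exists_isPath a u
    have hbp : b ∉ p.support :=
      hp.isTrail.not_mem_support_of_subsingleton_neighborSet (Ne.symm hab) hub.symm hb
    refine ⟨p.transfer _ fun e he ↦ ?_⟩
    induction e using Sym2.ind with | h s t => ?_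
    have hs : s ≠ b := fun hs ↦ hbp (hs ▸ p.fst_mem_support_of_mem_edges he)
    have ht : t ≠ b := fun ht ↦ hbp (ht ▸ p.snd_mem_support_of_mem_edges he)
    exact deleteIncidenceSet_sup_edge_adj.2 (.inl ⟨p.adj_of_mem_edges he, hs, ht⟩)
  exact (connected_iff _).2 ⟨fun a c ↦ (hreach a).trans (hreach c).symm, ⟨u⟩⟩

lemma ncard_edgeSet_deleteIncidenceSet_sup_edge [Finite V] {w : V}
    (hb : G.neighborSet b = {w}) (hub : u ≠ b) :
    (G.deleteIncidenceSet b ⊔ edge u b).edgeSet.ncard = G.edgeSet.ncard := by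
  have hbw : G.Adj b w := by rw [← mem_neighborSet, hb]; rfl
  have hadj : ∀ t, G.Adj b t ↔ t = w := fun t ↦ by rw [← mem_neighborSet, hb]; rfl
  have hinc : G.incidenceSet b = {s(b, w)} := by
    ext e
    induction e using Sym2.ind with | h s t => ?_
    rw [mk'_mem_incidenceSet_iff, Set.mem_singleton_iff]
    constructor
    · rintro ⟨hst, rfl | rfl⟩
      · rw [(hadj t).1 hst]
      · rw [(hadj s).1 hst.symm, Sym2.eq_swap]
    · intro he
      exact ⟨G.mem_edgeSet.1 (he ▸ hbw), by rcases Sym2.eq_iff.1 he with h | h <;> simp [h]⟩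
  have hub' : s(u, b) ∉ G.edgeSet \ {s(b, w)} := fun ⟨hE, hne⟩ ↦
    hne (Set.mem_singleton_iff.2 (by rw [(hadj u).1 (G.mem_edgeSet.1 hE).symm, Sym2.eq_swap]))
  rw [edgeSet_sup, edgeSet_deleteIncidenceSet, hinc, edgeSet_edge_of_ne hub, Set.union_singleton,
    Set.ncard_insert_of_notMem hub', Set.ncard_sdiff_singleton_add_one (s := G.edgeSet) hbw]

lemma isCherry_deleteIncidenceSet_sup_edge {x : V} (hu : G.neighborSet u = {x}) (hxb : x ≠ b)
    (hub : u ≠ b) : (G.deleteIncidenceSet b ⊔ edge u b).IsCherry b u x where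
  neighborSet_eq := by
    ext t
    have hadj : G.Adj u t ↔ t = x := by rw [← mem_neighborSet, hu]; rfl
    simp only [mem_neighborSet, deleteIncidenceSet_sup_edge_adj, hadj, Set.mem_insert_iff,
      Set.mem_singleton_iff]
    grind
  ne := hxb.symm
  not_adj := by
    have hux : G.Adj u x := by rw [← mem_neighborSet, hu]; rfl
    rw [← mem_neighborSet, neighborSet_deleteIncidenceSet_sup_edge hub]
    exact hux.ne.symm

end Rehang

lemma Connected.not_adj_of_subsingleton_neighborSet (hconn : G.Connected) {u b z : V}
    (hu : (G.neighborSet u).Subsingleton) (hb : (G.neighborSet b).Subsingleton)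
    (hzu : z ≠ u) (hzb : z ≠ b) : ¬G.Adj u b := fun hub ↦ by
  obtain ⟨p, hp⟩ := hconn.exists_isPath u z
  have hnil : ¬p.Nil := p.not_nil_of_ne hzu.symm
  have hsnd : p.snd = b := hu (p.adj_snd hnil) hub
  exact hp.isTrail.not_mem_support_of_subsingleton_neighborSet hub.ne' hzb.symm hb
    (hsnd ▸ p.getVert_mem_support 1)

lemma Connected.exists_adj_adj_not_adj (hconn : G.Connected) {a c : V} (hac : a ≠ c)
    (hnadj : ¬G.Adj a c) : ∃ y z, G.Adj a y ∧ G.Adj y z ∧ a ≠ z ∧ ¬G.Adj a z := by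
  obtain ⟨p⟩ := hconn.preconnected a c
  obtain ⟨d, -, hd, hd'⟩ := p.exists_boundary_dart (insert a (G.neighborSet a))
    (Set.mem_insert _ _) (by simp [hac.symm, hnadj])
  simp only [Set.mem_insert_iff, mem_neighborSet, not_or] at hd hd'
  obtain hd | hd := hd
  · exact absurd (hd ▸ d.adj) hd'.2
  · exact ⟨d.fst, d.snd, hd, d.adj, Ne.symm hd'.1, hd'.2⟩

lemma Connected.exists_isCherry_of_leaves [DecidableEq V] [Finite V] (hV : 2 < Nat.card V)
    (hconn : G.Connected) (htri : CyclesAreTriangles G) (hcac : IsCactus G) {u b : V}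
    (hu : (G.neighborSet u).Subsingleton) (hb : (G.neighborSet b).Subsingleton) (hub : u ≠ b) :
    ∃ H : SimpleGraph V, H.Connected ∧ IsCactus H ∧ CyclesAreTriangles H ∧
      H.edgeSet.ncard = G.edgeSet.ncard ∧ ∃ x₀ x₁ x₂, H.IsCherry x₀ x₁ x₂ := by
  have : Nontrivial V := ⟨u, b, hub⟩
  obtain ⟨z, hz⟩ : ({u, b}ᶜ : Set V).Nonempty := by
    rw [Set.nonempty_compl]
    intro h
    have := congrArg Set.ncard h
    rw [Set.ncard_univ, Set.ncard_pair hub] at this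
    omega
  simp only [Set.mem_compl_iff, Set.mem_insert_iff, Set.mem_singleton_iff, not_or] at hz
  obtain ⟨x, hux⟩ := hconn.preconnected.exists_adj_of_nontrivial u
  obtain ⟨w, hbw⟩ := hconn.preconnected.exists_adj_of_nontrivial b
  have hxb : x ≠ b := by
    rintro rfl
    exact hconn.not_adj_of_subsingleton_neighborSet hu hb hz.1 hz.2 hux
  have hcyc := fun v (c : (G.deleteIncidenceSet b ⊔ edge u b).Walk v v) (hc : c.IsCycle) ↦
    mem_edgeSet_of_isCycle_deleteIncidenceSet_sup_edge hub hc
  exact ⟨_, hconn.deleteIncidenceSet_sup_edge hb hub, hcac.of_forall_isCycle hcyc,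
    htri.of_forall_isCycle hcyc,
    ncard_edgeSet_deleteIncidenceSet_sup_edge (hb.eq_singleton_of_mem hbw) hub,
    b, u, x, isCherry_deleteIncidenceSet_sup_edge (hu.eq_singleton_of_mem hux) hxb hub⟩

end SimpleGraph

end

theorem maximal_cactus_degree_properties (n : ℕ) (hn : 4 ≤ n)
    (G : SimpleGraph (Fin n)) (hconn : G.Connected)
    (htri : ∀ (u : Fin n) (c : G.Walk u u), c.IsCycle → c.length = 3)
    (hcac : IsCactus G)
    (hmax : ∀ H : SimpleGraph (Fin n), H.Connected → IsCactus H →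
      H.edgeSet.ncard ≤ G.edgeSet.ncard) :
    {v : Fin n | (G.neighborSet v).ncard ≤ 1}.ncard ≤ 1 ∧
      (2 ≤ {v : Fin n | 3 ≤ (G.neighborSet v).ncard}.ncard →
        ∃ a b : Fin n, 3 ≤ (G.neighborSet a).ncard ∧
          3 ≤ (G.neighborSet b).ncard ∧ G.Adj a b) := by
  have hno_cherry : ∀ H : SimpleGraph (Fin n), H.Connected → IsCactus H →
      CyclesAreTriangles H → H.edgeSet.ncard = G.edgeSet.ncard →
      ∀ x₀ x₁ x₂, ¬H.IsCherry x₀ x₁ x₂ := by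
    intro H hH hHcac hHtri hcard x₀ x₁ x₂ hch
    have := hmax _ (hH.mono le_sup_left) (hch.isCactus_sup_edge hHtri hHcac)
    rw [hch.ncard_edgeSet_sup_edge] at this
    omega
  refine ⟨?_, fun h2 ↦ ?_⟩
  · by_contra! h1
    obtain ⟨u, hu, b, hb, hub⟩ := (Set.one_lt_ncard (Set.toFinite _)).1 h1
    obtain ⟨H, hH, hHcac, hHtri, hcard, x₀, x₁, x₂, hch⟩ :=
      hconn.exists_isCherry_of_leaves (by rw [Nat.card_fin]; omega) htri hcac
        (Set.ncard_le_one_iff_subsingleton.1 hu) (Set.ncard_le_one_iff_subsingleton.1 hb) hub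
    exact hno_cherry H hH hHcac hHtri hcard x₀ x₁ x₂ hch
  · by_contra! hno
    obtain ⟨a, ha, c, hc, hac⟩ := (Set.one_lt_ncard (Set.toFinite _)).1 h2
    obtain ⟨y, z, hay, hyz, haz, hnaz⟩ := hconn.exists_adj_adj_not_adj hac (hno a c ha hc)
    have hy : (G.neighborSet y).ncard ≤ 2 := by
      by_contra! hy
      exact hno a y ha hy hay
    refine hno_cherry G hconn hcac htri rfl a y z ⟨?_, haz, hnaz⟩
    refine (Set.eq_of_subset_of_ncard_le ?_ (by rwa [Set.ncard_pair haz])).symm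
    exact Set.insert_subset hay.symm (Set.singleton_subset_iff.2 hyz)
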